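/- For all s, t ∈ F \ F_{q^2} with s ∉ {t, t^(q^2)}: b(w_s, w'_t) = (s^(q^2)+s)^q (t^(q^2)+t)^q (s+t^(q^2))(s^(q^2)+t) + (s^(q^2)+s)(t^(q^2)+t)(s+t^(q^2))^q (s^(q^2)+t)^q + (s^(q^2)+s)^(q+1)(t^(q^2)+t)^(q+1), and b(w_s, w'_t) = 0 if and only if ν(s,t)^q + ν(s,t) = 1. -/
import Mathlib


/-- The Plücker coordinate vector `w_t = κ(m_𝐭)` in `F^6`. -/
def wvecPW {F : Type*} [Field F] (q : ℕ) (t : F) : Fin 6 → F :=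
  ![t ^ q + t ^ q ^ 3,
    t + t ^ q ^ 2,
    t ^ (1 + q) + t ^ (q ^ 2 + q ^ 3),
    t ^ (1 + q ^ 3) + t ^ (q + q ^ 2),
    t ^ (1 + q + q ^ 3) + t ^ (q + q ^ 2 + q ^ 3),
    t ^ (1 + q + q ^ 2) + t ^ (1 + q ^ 2 + q ^ 3)]

/-- The vector `w'_t`, obtained from `w_t` by interchanging the third and fourth
components. -/
def wvec'PW {F : Type*} [Field F] (q : ℕ) (t : F) : Fin 6 → F :=
  ![t ^ q + t ^ q ^ 3,
    t + t ^ q ^ 2,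
    t ^ (1 + q ^ 3) + t ^ (q + q ^ 2),
    t ^ (1 + q) + t ^ (q ^ 2 + q ^ 3),
    t ^ (1 + q + q ^ 3) + t ^ (q + q ^ 2 + q ^ 3),
    t ^ (1 + q + q ^ 2) + t ^ (1 + q ^ 2 + q ^ 3)]

/-- The bilinear form `b(X,Y) = X₁Y₆ + X₆Y₁ + X₂Y₅ + X₅Y₂ + X₃Y₄ + X₄Y₃` on `F^6`. -/
def b6PW {F : Type*} [Field F] (X Y : Fin 6 → F) : F :=
  X 0 * Y 5 + X 5 * Y 0 + X 1 * Y 4 + X 4 * Y 1 + X 2 * Y 3 + X 3 * Y 2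

/-- ν(s,t) = ((s+t^{q²})(s^{q²}+t))/((s+s^{q²})(t+t^{q²})). -/
def nuPW {F : Type*} [Field F] (q : ℕ) (s t : F) : F :=
  ((s + t ^ q ^ 2) * (s ^ q ^ 2 + t)) / ((s + s ^ q ^ 2) * (t + t ^ q ^ 2))


lemma keyPW {F : Type*} [Field F] (q : ℕ) (hfrob : ∀ a b : F, (a+b)^q = a^q + b^q)
    (htwo : (2:F) = 0) (s t : F) :
    b6PW (wvecPW q s) (wvec'PW q t) =
      (s ^ q ^ 2 + s) ^ q * (t ^ q ^ 2 + t) ^ q * (s + t ^ q ^ 2) * (s ^ q ^ 2 + t) +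
        (s ^ q ^ 2 + s) * (t ^ q ^ 2 + t) * (s + t ^ q ^ 2) ^ q * (s ^ q ^ 2 + t) ^ q +
        (s ^ q ^ 2 + s) ^ (q + 1) * (t ^ q ^ 2 + t) ^ (q + 1) := by
  have e2s : (s ^ q ^ 2) ^ q = s ^ q ^ 3 := by rw [← pow_mul, ← pow_succ]
  have e2t : (t ^ q ^ 2) ^ q = t ^ q ^ 3 := by rw [← pow_mul, ← pow_succ]
  show (s ^ q + s ^ q ^ 3) * (t ^ (1 + q + q ^ 2) + t ^ (1 + q ^ 2 + q ^ 3)) +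
      (s ^ (1 + q + q ^ 2) + s ^ (1 + q ^ 2 + q ^ 3)) * (t ^ q + t ^ q ^ 3) +
      (s + s ^ q ^ 2) * (t ^ (1 + q + q ^ 3) + t ^ (q + q ^ 2 + q ^ 3)) +
      (s ^ (1 + q + q ^ 3) + s ^ (q + q ^ 2 + q ^ 3)) * (t + t ^ q ^ 2) +
      (s ^ (1 + q) + s ^ (q ^ 2 + q ^ 3)) * (t ^ (1 + q) + t ^ (q ^ 2 + q ^ 3)) +
      (s ^ (1 + q ^ 3) + s ^ (q + q ^ 2)) * (t ^ (1 + q ^ 3) + t ^ (q + q ^ 2)) = _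
  simp only [pow_add, pow_one]
  rw [hfrob (s ^ q ^ 2) s, hfrob (t ^ q ^ 2) t, hfrob s (t ^ q ^ 2), hfrob (s ^ q ^ 2) t]
  simp only [e2s, e2t]
  generalize s ^ q ^ 3 = s3
  generalize t ^ q ^ 3 = t3
  generalize s ^ q ^ 2 = s2
  generalize t ^ q ^ 2 = t2
  generalize s ^ q = s1
  generalize t ^ q = t1
  linear_combination (-(s2*s3*t2*t3 + s2*s3*t1*t2 + s2*s3*t*t3 + s1*s2*t2*t3 + s1*s2*t1*t2 +
    s1*s2*t*t1 + s*s3*t2*t3 + s*s3*t*t3 + s*s3*t*t1 + s*s1*t1*t2 + s*s1*t*t3 + s*s1*t*t1)) * htwo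


theorem stmt_18 (h q : ℕ) (hh : 1 ≤ h) (hq : q = 2 ^ h)
    (F : Type*) [Field F] [Fintype F] (hF : Fintype.card F = q ^ 4)
    (s t : F) (hs : s ^ q ^ 2 ≠ s) (ht : t ^ q ^ 2 ≠ t)
    (h1 : s ≠ t) (h2 : s ≠ t ^ q ^ 2) :
    b6PW (wvecPW q s) (wvec'PW q t) =
      (s ^ q ^ 2 + s) ^ q * (t ^ q ^ 2 + t) ^ q * (s + t ^ q ^ 2) * (s ^ q ^ 2 + t) +
        (s ^ q ^ 2 + s) * (t ^ q ^ 2 + t) * (s + t ^ q ^ 2) ^ q * (s ^ q ^ 2 + t) ^ q +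
        (s ^ q ^ 2 + s) ^ (q + 1) * (t ^ q ^ 2 + t) ^ (q + 1) ∧
    (b6PW (wvecPW q s) (wvec'PW q t) = 0 ↔ (nuPW q s t) ^ q + nuPW q s t = 1) := by
  have hp2 : Fact (Nat.Prime 2) := ⟨Nat.prime_two⟩
  have hcp : CharP F (ringChar F) := ringChar.charP F
  obtain ⟨n, hp, hcard⟩ := FiniteField.card F (ringChar F)
  have hchar : ringChar F = 2 := by
    have hpow : (ringChar F) ^ (n : ℕ) = 2 ^ (h * 4) := by
      rw [← hcard, hF, hq, ← pow_mul]
    have hdvd : ringChar F ∣ 2 ^ (h * 4) := hpow ▸ dvd_pow_self _ n.pos.ne'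
    exact (Nat.prime_dvd_prime_iff_eq hp Nat.prime_two).mp (hp.dvd_of_dvd_pow hdvd)
  haveI : CharP F 2 := hchar ▸ hcp
  have htwo : (2 : F) = 0 := by
    have := CharP.cast_eq_zero F 2
    exact_mod_cast this
  have hfrob : ∀ a b : F, (a + b) ^ q = a ^ q + b ^ q := by
    intro a b
    rw [hq]
    exact add_pow_char_pow ..
  have key := keyPW q hfrob htwo s t
  have hsD : s + s ^ q ^ 2 ≠ 0 := fun hc => hs (by linear_combination hc - s * htwo)
  have htD : t + t ^ q ^ 2 ≠ 0 := fun hc => ht (by linear_combination hc - t * htwo)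
  set N : F := (s + t ^ q ^ 2) * (s ^ q ^ 2 + t) with hN
  set D : F := (s + s ^ q ^ 2) * (t + t ^ q ^ 2) with hD
  have hD0 : D ≠ 0 := mul_ne_zero hsD htD
  have hnu : nuPW q s t = N / D := rfl
  have e2s : (s ^ q ^ 2) ^ q = s ^ q ^ 3 := by rw [← pow_mul, ← pow_succ]
  have e2t : (t ^ q ^ 2) ^ q = t ^ q ^ 3 := by rw [← pow_mul, ← pow_succ]
  have hNq : N ^ q = (s ^ q + t ^ q ^ 3) * (s ^ q ^ 3 + t ^ q) := by
    rw [hN, mul_pow, hfrob s (t ^ q ^ 2), hfrob (s ^ q ^ 2) t, e2s, e2t]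
  have hDq : D ^ q = (s ^ q + s ^ q ^ 3) * (t ^ q + t ^ q ^ 3) := by
    rw [hD, mul_pow, hfrob s (s ^ q ^ 2), hfrob t (t ^ q ^ 2), e2s, e2t]
  have hEeq : (s ^ q ^ 2 + s) ^ q * (t ^ q ^ 2 + t) ^ q * (s + t ^ q ^ 2) * (s ^ q ^ 2 + t) +
        (s ^ q ^ 2 + s) * (t ^ q ^ 2 + t) * (s + t ^ q ^ 2) ^ q * (s ^ q ^ 2 + t) ^ q +
        (s ^ q ^ 2 + s) ^ (q + 1) * (t ^ q ^ 2 + t) ^ (q + 1) =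
      N ^ q * D + N * D ^ q + D ^ (q + 1) := by
    rw [pow_succ (s ^ q ^ 2 + s) q, pow_succ (t ^ q ^ 2 + t) q, pow_succ D q,
      hNq, hDq, hN, hD, hfrob (s ^ q ^ 2) s, hfrob (t ^ q ^ 2) t, hfrob s (t ^ q ^ 2),
      hfrob (s ^ q ^ 2) t, e2s, e2t]
    ring
  refine ⟨key, ?_⟩
  rw [key, hEeq]
  have hstep : nuPW q s t ^ q + nuPW q s t = (N ^ q * D + N * D ^ q) / D ^ (q + 1) := by
    rw [hnu, div_pow, div_add_div _ _ (pow_ne_zero q hD0) hD0, pow_succ]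
    ring
  rw [hstep, div_eq_one_iff_eq (pow_ne_zero (q + 1) hD0)]
  constructor
  · intro hb
    linear_combination hb - D ^ (q + 1) * htwo
  · intro hb
    linear_combination hb + D ^ (q + 1) * htwo
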